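/- arXiv:1910.12560 — 2 statements merged into one kernel-verified Lean document; each statement's English description precedes it below -/
import Mathlib

section
/- In the variant of the q-hypergeometric equation of degree two specialized by t₂ → 0, namely (x−q^{h₁+1/2}t₁)g(x/q) + q^{α₁+α₂}(x−q^{l₁−1/2}t₁)g(qx) − [(q^{α₁}+q^{α₂})x − q^{(h₁+h₂+l₁+l₂+α₁+α₂)/2}(q^{−h₂}+q^{−l₂})t₁]g(x) = 0, the substitution t₁=1, h₁=1/2, h₂−l₂ = α₁+α₂+l₁−3/2, a=q^{α₁}, b=q^{α₂}, c=q^{α₁+α₂+l₁−1/2} transforms the equation into the standard q-hypergeometric equation (x−q)g(x/q) − ((a+b)x − q − c)g(x) + (abx − c)g(qx) = 0. -/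
/-- Real power `q^e` of a positive real base, viewed as a complex number. -/
noncomputable def qr (q e : ℝ) : ℂ := ((q ^ e : ℝ) : ℂ)

lemma qr_mul {q : ℝ} (hq : 0 < q) (e f : ℝ) : qr q e * qr q f = qr q (e + f) := by
  simp [qr, Real.rpow_add hq]

lemma qr_congr (q : ℝ) {e f : ℝ} (h : e = f) : qr q e = qr q f := by rw [h]

lemma qr_one {q : ℝ} (hq : 0 < q) : qr q 1 = q := by simp [qr]

/-- Under the substitution `t₁ = 1`, `h₁ = 1/2`, `h₂ - l₂ = α₁+α₂+l₁-3/2`,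
`a = q^{α₁}`, `b = q^{α₂}`, `c = q^{α₁+α₂+l₁-1/2}`, the coefficient polynomials of the
`t₂ → 0` degeneration of the variant of the q-hypergeometric equation of degree two
coincide with those of the standard q-hypergeometric equation
`(x-q)g(x/q) - ((a+b)x - q - c)g(x) + (abx - c)g(qx) = 0`. -/
theorem degenerate_variant_is_qHypEq (q : ℝ) (hq0 : 0 < q) (hq1 : q < 1)
    (h₁ h₂ l₁ l₂ α₁ α₂ : ℝ) (t₁ : ℂ)
    (ht₁ : t₁ = 1) (hh₁ : h₁ = 1/2) (hh₂ : h₂ - l₂ = α₁ + α₂ + l₁ - 3/2)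
    (a b c : ℂ) (ha : a = qr q α₁) (hb : b = qr q α₂)
    (hc : c = qr q (α₁ + α₂ + l₁ - 1/2)) :
    ∀ x : ℂ,
      x - qr q (h₁ + 1/2) * t₁ = x - q
      ∧ qr q (α₁ + α₂) * (x - qr q (l₁ - 1/2) * t₁) = a * b * x - c
      ∧ (qr q α₁ + qr q α₂) * x
          - qr q ((h₁ + h₂ + l₁ + l₂ + α₁ + α₂) / 2) * (qr q (-h₂) + qr q (-l₂)) * t₁
        = (a + b) * x - q - c := by
  have hh₂' : h₂ = l₂ + (α₁ + α₂ + l₁ - 3/2) := by linarith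
  subst ht₁ hh₁ ha hb hc hh₂'
  intro x
  refine ⟨?_, ?_, ?_⟩
  · rw [mul_one, qr_congr q (by norm_num : (1/2 + 1/2 : ℝ) = 1), qr_one hq0]
  · rw [mul_one, mul_sub, qr_mul hq0, qr_mul hq0]
    ring_nf
  · rw [mul_one, mul_add, qr_mul hq0, qr_mul hq0,
      qr_congr q (by ring : (1/2 + (l₂ + (α₁ + α₂ + l₁ - 3/2)) + l₁ + l₂ + α₁ + α₂) / 2
        + -(l₂ + (α₁ + α₂ + l₁ - 3/2)) = 1),
      qr_congr q (by ring : (1/2 + (l₂ + (α₁ + α₂ + l₁ - 3/2)) + l₁ + l₂ + α₁ + α₂) / 2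
        + -l₂ = α₁ + α₂ + l₁ - 1/2), qr_one hq0]
    ring
end

section
/- Set λ = (h₁+h₂−l₁−l₂−α₁−α₂+1)/2. The limiting function g(x) = x^{−α₁} Σ_{n≥0} (q^{λ+α₁};q)_n (q^{λ+α₁−h₂+l₂};q)_n / ((q^{α₁−α₂+1};q)_n (q;q)_n) (q^{l₁+1/2}t₁/x)^n satisfies the degenerate (t₂→0) variant of the q-hypergeometric equation: (x−q^{h₁+1/2}t₁)g(x/q) + q^{α₁+α₂}(x−q^{l₁−1/2}t₁)g(qx) − [(q^{α₁}+q^{α₂})x − q^{(h₁+h₂+l₁+l₂+α₁+α₂)/2}(q^{−h₂}+q^{−l₂})t₁]g(x) = 0. -/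
/-- The q-Pochhammer symbol `(z;q)_n = ∏_{j=0}^{n-1} (1 - z q^j)`. -/
noncomputable def qPoch (q z : ℂ) (n : ℕ) : ℂ := ∏ j ∈ Finset.range n, (1 - z * q ^ j)

/-- The `n`-th term of the limiting series (with `λ = (h₁+h₂-l₁-l₂-α₁-α₂+1)/2`):
`(q^{λ+α₁};q)_n (q^{λ+α₁-h₂+l₂};q)_n / ((q^{α₁-α₂+1};q)_n (q;q)_n) (q^{l₁+1/2}t₁/x)^n`. -/
noncomputable def term17 (q h₁ h₂ l₁ l₂ α₁ α₂ : ℝ) (t₁ : ℂ) (x : ℂ) (n : ℕ) : ℂ :=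
  qPoch (q : ℂ) (qr q ((h₁ + h₂ - l₁ - l₂ - α₁ - α₂ + 1) / 2 + α₁)) n
    * qPoch (q : ℂ) (qr q ((h₁ + h₂ - l₁ - l₂ - α₁ - α₂ + 1) / 2 + α₁ - h₂ + l₂)) n
    / (qPoch (q : ℂ) (qr q (α₁ - α₂ + 1)) n * qPoch (q : ℂ) (q : ℂ) n)
    * (qr q (l₁ + 1/2) * t₁ / x) ^ n

/-- The limiting function `g(x) = x^{-α₁} Σ_n term17 n`. -/
noncomputable def g17 (q h₁ h₂ l₁ l₂ α₁ α₂ : ℝ) (t₁ : ℂ) (x : ℂ) : ℂ :=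
  x ^ (-(α₁ : ℂ)) * ∑' n : ℕ, term17 q h₁ h₂ l₁ l₂ α₁ α₂ t₁ x n

section Aux

lemma qr_mul_s17 (q : ℝ) (hq0 : 0 < q) (a b : ℝ) : qr q a * qr q b = qr q (a + b) := by
  simp [qr, ← Complex.ofReal_mul, ← Real.rpow_add hq0]

lemma qr_zero (q : ℝ) : qr q 0 = 1 := by simp [qr]

lemma qr_ne_zero (q : ℝ) (hq0 : 0 < q) (a : ℝ) : qr q a ≠ 0 := by
  simp only [qr, Complex.ofReal_ne_zero]
  positivity

lemma qr_natCast (q : ℝ) (n : ℕ) : (q:ℂ) ^ n = qr q (n : ℝ) := by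
  simp [qr, Real.rpow_natCast, Complex.ofReal_pow]

lemma qr_inv_natCast (q : ℝ) (hq0 : 0 < q) (n : ℕ) : ((q:ℂ)⁻¹) ^ n = qr q (-(n : ℝ)) := by
  rw [inv_pow, qr_natCast q n, qr, qr, Real.rpow_neg hq0.le, Complex.ofReal_inv]

lemma qr_one_eq (q : ℝ) : (q : ℂ) = qr q 1 := by simp [qr]

lemma one_sub_qr_ne_zero (q : ℝ) (hq0 : 0 < q) (hq1 : q < 1) (e : ℝ) (he : e ≠ 0) :
    (1 : ℂ) - qr q e ≠ 0 := by
  rw [qr, ← Complex.ofReal_one, ← Complex.ofReal_sub, Complex.ofReal_ne_zero]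
  rcases lt_or_gt_of_ne he with h | h
  · have : 1 < q ^ e := Real.one_lt_rpow_iff_of_pos hq0 |>.mpr (Or.inr ⟨hq1, h⟩)
    linarith
  · have : q ^ e < 1 := Real.rpow_lt_one hq0.le hq1 h
    linarith

lemma cpow_real_mul (r : ℝ) (hr : 0 < r) (x : ℂ) (hx : x ≠ 0) (s : ℂ) :
    ((r:ℂ) * x) ^ s = (r:ℂ) ^ s * x ^ s := by
  have hr' : (r:ℂ) ≠ 0 := by exact_mod_cast hr.ne'
  rw [Complex.cpow_def_of_ne_zero (mul_ne_zero hr' hx), Complex.log_ofReal_mul hr hx, add_mul,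
    Complex.exp_add, Complex.cpow_def_of_ne_zero hx, Complex.cpow_def_of_ne_zero hr']
  congr 2
  rw [Complex.ofReal_log hr.le]

lemma scalar1 (q : ℝ) (hq0 : 0 < q) (α₁ α₂ : ℝ) (m : ℝ) :
    qr q α₂ * qr q (-(m+1)) * ((1 - qr q (α₁-α₂+1) * qr q m) * (1 - qr q (m+1)))
      = qr q α₁ * qr q (m+1) + qr q α₂ * qr q (-(m+1)) - qr q α₁ - qr q α₂ := by
  simp only [qr, ← Complex.ofReal_one, ← Complex.ofReal_mul, ← Complex.ofReal_sub,
    ← Complex.ofReal_add]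
  norm_cast
  simp only [mul_sub, sub_mul, mul_add, add_mul, mul_one, one_mul, mul_assoc,
    ← Real.rpow_add hq0]
  ring_nf

lemma scalar2 (q : ℝ) (hq0 : 0 < q) (h₁ h₂ l₁ l₂ α₁ α₂ : ℝ) (m : ℝ) :
    qr q (l₁+1/2) * qr q α₂ * qr q (-(m+1)) *
      ((1 - qr q ((h₁+h₂-l₁-l₂-α₁-α₂+1)/2+α₁) * qr q m) *
       (1 - qr q ((h₁+h₂-l₁-l₂-α₁-α₂+1)/2+α₁-h₂+l₂) * qr q m))
      = qr q α₁ * qr q (h₁+1/2) * qr q m + qr q α₂ * qr q (l₁-1/2) * qr q (-m)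
        - qr q ((h₁+h₂+l₁+l₂+α₁+α₂)/2) * (qr q (-h₂) + qr q (-l₂)) := by
  simp only [qr, ← Complex.ofReal_one, ← Complex.ofReal_mul, ← Complex.ofReal_sub,
    ← Complex.ofReal_add]
  norm_cast
  simp only [mul_sub, sub_mul, mul_add, add_mul, mul_one, one_mul, mul_assoc,
    ← Real.rpow_add hq0]
  ring_nf

lemma qPoch_succ (q z : ℂ) (n : ℕ) : qPoch q z (n+1) = qPoch q z n * (1 - z * q ^ n) :=
  Finset.prod_range_succ _ n

lemma qPochC_ne_zero (q : ℝ) (hq0 : 0 < q) (hq1 : q < 1) (α₁ α₂ : ℝ)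
    (hαα : ∀ n : ℕ, α₁ - α₂ + n ≠ 0) (n : ℕ) :
    qPoch (q : ℂ) (qr q (α₁ - α₂ + 1)) n ≠ 0 := by
  rw [qPoch]
  apply Finset.prod_ne_zero_iff.mpr
  intro j _
  rw [qr_natCast q j, qr_mul_s17 q hq0]
  apply one_sub_qr_ne_zero q hq0 hq1
  have := hαα (j+1)
  push_cast at this
  intro h; apply this; linarith

lemma qPochQ_ne_zero (q : ℝ) (hq0 : 0 < q) (hq1 : q < 1) (n : ℕ) :
    qPoch (q : ℂ) (q : ℂ) n ≠ 0 := by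
  rw [qPoch]
  apply Finset.prod_ne_zero_iff.mpr
  intro j _
  rw [qr_natCast q j, qr_one_eq q, qr_mul_s17 q hq0]
  apply one_sub_qr_ne_zero q hq0 hq1
  positivity

lemma term17_succ (q : ℝ) (hq0 : 0 < q) (hq1 : q < 1) (h₁ h₂ l₁ l₂ α₁ α₂ : ℝ)
    (hαα : ∀ n : ℕ, α₁ - α₂ + n ≠ 0) (t₁ : ℂ) (x : ℂ) (hx : x ≠ 0) (n : ℕ) :
    term17 q h₁ h₂ l₁ l₂ α₁ α₂ t₁ x (n+1)
      = term17 q h₁ h₂ l₁ l₂ α₁ α₂ t₁ x n *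
        ((1 - qr q ((h₁ + h₂ - l₁ - l₂ - α₁ - α₂ + 1) / 2 + α₁) * (q:ℂ) ^ n)
          * (1 - qr q ((h₁ + h₂ - l₁ - l₂ - α₁ - α₂ + 1) / 2 + α₁ - h₂ + l₂) * (q:ℂ) ^ n)
          * (qr q (l₁ + 1/2) * t₁ / x)
          / ((1 - qr q (α₁ - α₂ + 1) * (q:ℂ) ^ n) * (1 - (q:ℂ) * (q:ℂ) ^ n))) := by
  have hC : qPoch (q : ℂ) (qr q (α₁ - α₂ + 1)) n ≠ 0 := qPochC_ne_zero q hq0 hq1 α₁ α₂ hαα n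
  have hQ : qPoch (q : ℂ) (q : ℂ) n ≠ 0 := qPochQ_ne_zero q hq0 hq1 n
  have hc1 : (1 - qr q (α₁ - α₂ + 1) * (q:ℂ) ^ n) ≠ 0 := by
    rw [qr_natCast q n, qr_mul_s17 q hq0]
    apply one_sub_qr_ne_zero q hq0 hq1
    have := hαα (n+1); push_cast at this
    intro h; apply this; linarith
  have hc2 : (1 - (q:ℂ) * (q:ℂ) ^ n) ≠ 0 := by
    rw [qr_natCast q n, qr_one_eq q, qr_mul_s17 q hq0]
    apply one_sub_qr_ne_zero q hq0 hq1
    positivity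
  rw [term17, term17, qPoch_succ, qPoch_succ, qPoch_succ, qPoch_succ, pow_succ]
  field_simp

end Aux

/-- The limiting function satisfies the `t₂ → 0` degeneration of the variant of the
q-hypergeometric equation of degree two. -/
theorem g17_solves_degenerate_variant (q : ℝ) (hq0 : 0 < q) (hq1 : q < 1)
    (h₁ h₂ l₁ l₂ α₁ α₂ : ℝ) (hαα : ∀ n : ℕ, α₁ - α₂ + n ≠ 0)
    (t₁ : ℂ) (ht₁ : t₁ ≠ 0) (x : ℂ) (hx : x ≠ 0)
    (hs₁ : Summable (term17 q h₁ h₂ l₁ l₂ α₁ α₂ t₁ (x / q)))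
    (hs₂ : Summable (term17 q h₁ h₂ l₁ l₂ α₁ α₂ t₁ x))
    (hs₃ : Summable (term17 q h₁ h₂ l₁ l₂ α₁ α₂ t₁ ((q : ℂ) * x))) :
    (x - qr q (h₁ + 1/2) * t₁) * g17 q h₁ h₂ l₁ l₂ α₁ α₂ t₁ (x / q)
      + qr q (α₁ + α₂) * (x - qr q (l₁ - 1/2) * t₁) * g17 q h₁ h₂ l₁ l₂ α₁ α₂ t₁ ((q : ℂ) * x)
      - ((qr q α₁ + qr q α₂) * x
          - qr q ((h₁ + h₂ + l₁ + l₂ + α₁ + α₂) / 2) * (qr q (-h₂) + qr q (-l₂)) * t₁)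
          * g17 q h₁ h₂ l₁ l₂ α₁ α₂ t₁ x = 0 := by
  have hqC : (q : ℂ) ≠ 0 := by exact_mod_cast hq0.ne'
  set f : ℕ → ℂ := term17 q h₁ h₂ l₁ l₂ α₁ α₂ t₁ x with hf
  -- shift lemmas
  have hup : ∀ n, term17 q h₁ h₂ l₁ l₂ α₁ α₂ t₁ (x / q) n = f n * (q:ℂ) ^ n := by
    intro n
    have key : qr q (l₁ + 1/2) * t₁ / (x / (q:ℂ)) = qr q (l₁ + 1/2) * t₁ / x * (q:ℂ) := by
      rw [div_div_eq_mul_div, div_mul_eq_mul_div]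
    rw [term17, hf, term17, key, mul_pow]
    ring
  have hdn : ∀ n, term17 q h₁ h₂ l₁ l₂ α₁ α₂ t₁ ((q:ℂ) * x) n = f n * ((q:ℂ)⁻¹) ^ n := by
    intro n
    have key : qr q (l₁ + 1/2) * t₁ / ((q:ℂ) * x) = qr q (l₁ + 1/2) * t₁ / x * (q:ℂ)⁻¹ := by
      rw [div_mul_eq_div_div_swap, div_eq_mul_inv]
    rw [term17, hf, term17, key, mul_pow]
    ring
  -- cpow factorization
  have hcp1 : (x / (q:ℂ)) ^ (-(α₁:ℂ)) = qr q α₁ * x ^ (-(α₁:ℂ)) := by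
    have h1 : x / (q:ℂ) = ((q⁻¹ : ℝ) : ℂ) * x := by
      rw [Complex.ofReal_inv]; field_simp
    rw [h1, cpow_real_mul q⁻¹ (by positivity) x hx]
    congr 1
    rw [show (-(α₁:ℂ)) = ((-α₁ : ℝ) : ℂ) by push_cast; ring,
      ← Complex.ofReal_cpow (by positivity) (-α₁), qr]
    norm_cast
    rw [Real.inv_rpow hq0.le, Real.rpow_neg hq0.le, inv_inv]
  have hcp2 : ((q:ℂ) * x) ^ (-(α₁:ℂ)) = qr q (-α₁) * x ^ (-(α₁:ℂ)) := by
    rw [cpow_real_mul q hq0 x hx]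
    congr 1
    rw [show (-(α₁:ℂ)) = ((-α₁ : ℝ) : ℂ) by push_cast; ring,
      ← Complex.ofReal_cpow hq0.le (-α₁), qr]
  -- summability in shifted form
  have hS1 : Summable (fun n => f n * (q:ℂ) ^ n) := hs₁.congr hup
  have hS3 : Summable (fun n => f n * ((q:ℂ)⁻¹) ^ n) := hs₃.congr hdn
  -- abbreviations
  set M : ℂ := qr q ((h₁ + h₂ + l₁ + l₂ + α₁ + α₂) / 2) * (qr q (-h₂) + qr q (-l₂)) with hM
  set X : ℕ → ℂ := fun n =>
    x * (qr q α₁ * (q:ℂ) ^ n + qr q α₂ * ((q:ℂ)⁻¹) ^ n - qr q α₁ - qr q α₂) * f n with hX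
  set T : ℕ → ℂ := fun n =>
    (M * t₁ - qr q α₁ * qr q (h₁ + 1/2) * t₁ * (q:ℂ) ^ n
      - qr q α₂ * qr q (l₁ - 1/2) * t₁ * ((q:ℂ)⁻¹) ^ n) * f n with hT
  have hsX : Summable X := by
    apply Summable.congr (((hS1.mul_left (x * qr q α₁)).add (hS3.mul_left (x * qr q α₂))).add
      (hs₂.mul_left (-(x * (qr q α₁ + qr q α₂)))))
    intro n
    simp only [hX, hf]
    ring
  have hsT : Summable T := by
    apply Summable.congr (((hs₂.mul_left (M * t₁)).add
      (hS1.mul_left (-(qr q α₁ * qr q (h₁ + 1/2) * t₁)))).add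
      (hS3.mul_left (-(qr q α₂ * qr q (l₁ - 1/2) * t₁))))
    intro n
    simp only [hT, hf]
    ring
  -- the key recurrence
  have hXT : ∀ n : ℕ, X (n+1) = - T n := by
    intro n
    have hc1 : (1 - qr q (α₁ - α₂ + 1) * (q:ℂ) ^ n) ≠ 0 := by
      rw [qr_natCast q n, qr_mul_s17 q hq0]
      apply one_sub_qr_ne_zero q hq0 hq1
      have := hαα (n+1); push_cast at this
      intro h; apply this; linarith
    have hc2 : (1 - (q:ℂ) * (q:ℂ) ^ n) ≠ 0 := by
      rw [qr_natCast q n, qr_one_eq q, qr_mul_s17 q hq0]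
      apply one_sub_qr_ne_zero q hq0 hq1
      positivity
    have hsucc := term17_succ q hq0 hq1 h₁ h₂ l₁ l₂ α₁ α₂ hαα t₁ x hx n
    rw [← hf] at hsucc
    -- b identity from scalar1
    have hb : qr q α₁ * (q:ℂ) ^ (n+1) + qr q α₂ * ((q:ℂ)⁻¹) ^ (n+1) - qr q α₁ - qr q α₂
        = (1 - qr q (α₁ - α₂ + 1) * (q:ℂ) ^ n) * (1 - (q:ℂ) * (q:ℂ) ^ n)
          * (qr q α₂ * ((q:ℂ)⁻¹) ^ (n+1)) := by
      have := scalar1 q hq0 α₁ α₂ (n : ℝ)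
      rw [qr_natCast q (n+1), qr_inv_natCast q hq0 (n+1), qr_natCast q n,
        qr_one_eq q, qr_mul_s17 q hq0 1 (n:ℝ)]
      push_cast
      rw [show (1 : ℝ) + (n:ℝ) = (n:ℝ) + 1 by ring]
      linear_combination -this
    -- the generic cancellation
    have hcancel : ∀ (d w Fv Num K' : ℂ), d ≠ 0 →
        x * (d * w) * (Fv * (Num * (K' / x) / d)) = w * Fv * Num * K' := by
      intro d w Fv Num K' hd
      field_simp
    simp only [hX, hT]
    rw [hsucc, hb]
    rw [show (1 - qr q (α₁ - α₂ + 1) * (q:ℂ) ^ n) * (1 - (q:ℂ) * (q:ℂ) ^ n)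
          * (qr q α₂ * ((q:ℂ)⁻¹) ^ (n+1))
        = ((1 - qr q (α₁ - α₂ + 1) * (q:ℂ) ^ n) * (1 - (q:ℂ) * (q:ℂ) ^ n))
          * (qr q α₂ * ((q:ℂ)⁻¹) ^ (n+1)) by ring]
    rw [show f n *
        ((1 - qr q ((h₁ + h₂ - l₁ - l₂ - α₁ - α₂ + 1) / 2 + α₁) * (q:ℂ) ^ n)
          * (1 - qr q ((h₁ + h₂ - l₁ - l₂ - α₁ - α₂ + 1) / 2 + α₁ - h₂ + l₂) * (q:ℂ) ^ n)
          * (qr q (l₁ + 1/2) * t₁ / x)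
          / ((1 - qr q (α₁ - α₂ + 1) * (q:ℂ) ^ n) * (1 - (q:ℂ) * (q:ℂ) ^ n)))
        = f n *
        (((1 - qr q ((h₁ + h₂ - l₁ - l₂ - α₁ - α₂ + 1) / 2 + α₁) * (q:ℂ) ^ n)
          * (1 - qr q ((h₁ + h₂ - l₁ - l₂ - α₁ - α₂ + 1) / 2 + α₁ - h₂ + l₂) * (q:ℂ) ^ n))
          * ((qr q (l₁ + 1/2) * t₁) / x)
          / ((1 - qr q (α₁ - α₂ + 1) * (q:ℂ) ^ n) * (1 - (q:ℂ) * (q:ℂ) ^ n))) by ring]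
    rw [hcancel _ _ _ _ _ (mul_ne_zero hc1 hc2)]
    -- now apply scalar2
    have hs2 := scalar2 q hq0 h₁ h₂ l₁ l₂ α₁ α₂ (n : ℝ)
    rw [← qr_natCast q n, ← qr_inv_natCast q hq0 n,
      show -((n:ℝ)+1) = -((n+1 : ℕ) : ℝ) by push_cast; ring, ← qr_inv_natCast q hq0 (n+1)]
      at hs2
    linear_combination (t₁ * f n) * hs2
  -- assemble
  have hX0 : X 0 = 0 := by
    simp only [hX, pow_zero]
    ring_nf
  -- main computation
  rw [g17, g17, g17, hcp1, hcp2]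
  rw [tsum_congr hup, tsum_congr hdn]
  have hα₂ : qr q (α₁ + α₂) * qr q (-α₁) = qr q α₂ := by
    rw [qr_mul_s17 q hq0]; congr 1; ring
  have key : (∑' n, (X n + T n)) = 0 := by
    rw [Summable.tsum_add hsX hsT, Summable.tsum_eq_zero_add hsX, hX0, zero_add]
    rw [tsum_congr (fun n => hXT n), tsum_neg]
    ring
  have expand : (x - qr q (h₁ + 1/2) * t₁) * (qr q α₁ * x ^ (-(α₁:ℂ)) * ∑' n, f n * (q:ℂ) ^ n)
      + qr q (α₁ + α₂) * (x - qr q (l₁ - 1/2) * t₁)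
        * (qr q (-α₁) * x ^ (-(α₁:ℂ)) * ∑' n, f n * ((q:ℂ)⁻¹) ^ n)
      - ((qr q α₁ + qr q α₂) * x - M * t₁) * (x ^ (-(α₁:ℂ)) * ∑' n, f n)
      = x ^ (-(α₁:ℂ)) * ∑' n, (X n + T n) := by
    have e1 : ∑' n, (X n + T n)
        = (qr q α₁ * (x - qr q (h₁ + 1/2) * t₁)) * (∑' n, f n * (q:ℂ) ^ n)
          + (qr q α₂ * (x - qr q (l₁ - 1/2) * t₁)) * (∑' n, f n * ((q:ℂ)⁻¹) ^ n)
          + (M * t₁ - (qr q α₁ + qr q α₂) * x) * (∑' n, f n) := by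
      rw [← tsum_mul_left, ← tsum_mul_left, ← tsum_mul_left,
        ← Summable.tsum_add (hS1.mul_left _) (hS3.mul_left _),
        ← Summable.tsum_add ((hS1.mul_left _).add (hS3.mul_left _)) (hs₂.mul_left _)]
      apply tsum_congr
      intro n
      simp only [hX, hT]
      ring
    rw [e1, ← hα₂]
    ring
  rw [expand, key, mul_zero]
end
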